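/- The quadratic form q(x₁,…,x₆) = x₁x₂ + x₃x₄ + x₅x₆ + x₁ + x₂ + x₃ + x₄ + x₅ + x₆ on GF(2)^6 has exactly 27 nonzero zeros; moreover, for every nonzero symmetric 3×3 matrix X over GF(2), q(α(X)) = 0 if and only if X + 𝟙 is invertible (so the set of nonzero zeros of q is exactly α({Y + 𝟙ß: Y invertible symmetric, Y ≠ 𝟙})). -/

import Mathlib

open Matrix

/-! For symmetric `X` over `GF(2)` one has the identity `q(α(X)) + det(X + 𝟙) = 1`, and `α`
restricted to symmetric matrices is a bijection with an explicit polynomial inverse. The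
equivalence and the description of the zero set follow at once; the count 27 is a finite check. -/

/-- The coordinate map `α`. -/
def alphaMap (X : Matrix (Fin 3) (Fin 3) (ZMod 2)) : Fin 6 → ZMod 2 :=
  ![X 0 0, X 1 2 + X 1 1 * X 2 2, X 1 1, X 0 2 + X 0 0 * X 2 2, X 2 2,
    X 0 1 + X 0 0 * X 1 1]

/-- The quadratic form `q(x) = x₁x₂ + x₃x₄ + x₅x₆ + x₁ + x₂ + x₃ + x₄ + x₅ + x₆`. -/
def qForm (x : Fin 6 → ZMod 2) : ZMod 2 :=
  x 0 * x 1 + x 2 * x 3 + x 4 * x 5 + x 0 + x 1 + x 2 + x 3 + x 4 + x 5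

def symmOfCoords (x : Fin 6 → ZMod 2) : Matrix (Fin 3) (Fin 3) (ZMod 2) :=
  !![x 0, x 5 + x 0 * x 2, x 3 + x 0 * x 4;
     x 5 + x 0 * x 2, x 2, x 1 + x 2 * x 4;
     x 3 + x 0 * x 4, x 1 + x 2 * x 4, x 4]

lemma isSymm_symmOfCoords (x : Fin 6 → ZMod 2) : (symmOfCoords x).IsSymm := by
  ext i j
  fin_cases i <;> fin_cases j <;> rfl

lemma alphaMap_symmOfCoords (x : Fin 6 → ZMod 2) : alphaMap (symmOfCoords x) = x := by
  funext i
  fin_cases i <;> simp [alphaMap, symmOfCoords, CharTwo.add_cancel_right]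

lemma symmOfCoords_alphaMap {X : Matrix (Fin 3) (Fin 3) (ZMod 2)} (hX : X.IsSymm) :
    symmOfCoords (alphaMap X) = X := by
  ext i j
  fin_cases i <;> fin_cases j <;>
    simp [alphaMap, symmOfCoords, CharTwo.add_cancel_right, hX.apply 0 1, hX.apply 0 2, hX.apply 1 2]

lemma alphaMap_eq_zero_iff {X : Matrix (Fin 3) (Fin 3) (ZMod 2)} (hX : X.IsSymm) :
    alphaMap X = 0 ↔ X = 0 := by
  constructor
  · intro h
    rw [← symmOfCoords_alphaMap hX, h]
    decide
  · rintro rfl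
    decide

lemma qForm_alphaMap_add_det {X : Matrix (Fin 3) (Fin 3) (ZMod 2)} (hX : X.IsSymm) :
    qForm (alphaMap X) + (X + 1).det = 1 := by
  have idem (t : ZMod 2) : t * t = t := by decide +revert
  rw [det_fin_three]
  simp only [qForm, alphaMap, Fin.isValue, cons_val_zero, cons_val_one, cons_val, Matrix.add_apply,
    one_apply_eq, ne_eq, Fin.reduceEq, not_false_eq_true, one_apply_ne, add_zero, zero_ne_one,
    one_ne_zero, hX.apply 0 1, hX.apply 0 2, hX.apply 1 2]
  -- in characteristic two the two sides differ by `Σ (Xᵢᵢ + 1)(Xⱼₖ² + Xⱼₖ)`, `{i, j, k} = {0, 1, 2}`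
  linear_combination (norm := ring_nf)
    (X 0 0 + 1) * idem (X 1 2) + (X 1 1 + 1) * idem (X 0 2) + (X 2 2 + 1) * idem (X 0 1)
  reduce_mod_char

lemma qForm_alphaMap_eq_zero_iff {X : Matrix (Fin 3) (Fin 3) (ZMod 2)} (hX : X.IsSymm) :
    qForm (alphaMap X) = 0 ↔ (X + 1).det = 1 := by
  rw [CharTwo.add_eq_iff_eq_add.mp (qForm_alphaMap_add_det hX), CharTwo.add_eq_zero, eq_comm]

lemma exists_eq_add_one_iff {n R : Type*} [Fintype n] [DecidableEq n] [Nonempty n] [CommRing R]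
    [CharP R 2] {X : Matrix n n R} :
    (∃ Y : Matrix n n R, Y = Yᵀ ∧ Y.det = 1 ∧ Y ≠ 1 ∧ X = Y + 1) ↔
      X = Xᵀ ∧ X ≠ 0 ∧ (X + 1).det = 1 := by
  constructor
  · rintro ⟨Y, hY, hdet, hne, rfl⟩
    refine ⟨by rw [transpose_add, transpose_one, ← hY], ?_, by rwa [CharTwo.add_cancel_right]⟩
    rwa [Ne, CharTwo.add_eq_zero]
  · rintro ⟨hX, hne, hdet⟩
    refine ⟨X + 1, by rw [transpose_add, transpose_one, ← hX], hdet, ?_,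
      (CharTwo.add_cancel_right X 1).symm⟩
    rwa [Ne, add_eq_right]

/-- `q` has exactly 27 nonzero zeros; for nonzero symmetric `X`, `q(α(X)) = 0` iff
`X + 1` is invertible; so the zeros of `q` are exactly `α` of the translates by `1`
of the invertible symmetric matrices different from `1`. -/
theorem q_zeros :
    Nat.card {x : Fin 6 → ZMod 2 // x ≠ 0 ∧ qForm x = 0} = 27 ∧
    (∀ X : Matrix (Fin 3) (Fin 3) (ZMod 2), X = Xᵀ → X ≠ 0 →
      (qForm (alphaMap X) = 0 ↔ (X + 1).det = 1)) ∧
    {x : Fin 6 → ZMod 2 | x ≠ 0 ∧ qForm x = 0} =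
      alphaMap '' {X : Matrix (Fin 3) (Fin 3) (ZMod 2) |
        ∃ Y : Matrix (Fin 3) (Fin 3) (ZMod 2), Y = Yᵀ ∧ Y.det = 1 ∧ Y ≠ 1 ∧ X = Y + 1} := by
  refine ⟨?_, fun X hX _ ↦ qForm_alphaMap_eq_zero_iff hX.symm, ?_⟩
  · rw [Nat.card_eq_fintype_card]
    decide
  ext x
  simp only [Set.mem_ofPred, Set.mem_image, exists_eq_add_one_iff]
  constructor
  · rintro ⟨hx, hq⟩
    have hsymm := isSymm_symmOfCoords x
    rw [← alphaMap_symmOfCoords x] at hx hq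
    exact ⟨symmOfCoords x, ⟨hsymm.symm, (alphaMap_eq_zero_iff hsymm).not.mp hx,
      (qForm_alphaMap_eq_zero_iff hsymm).mp hq⟩, alphaMap_symmOfCoords x⟩
  · rintro ⟨X, ⟨hX, hX0, hdet⟩, rfl⟩
    exact ⟨(alphaMap_eq_zero_iff hX.symm).not.mpr hX0, (qForm_alphaMap_eq_zero_iff hX.symm).mpr hdet⟩
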